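/- Suppose the Position Value Y^p satisfies the balanced link contributions property on network games. Then the Expected Position Value Ψ^p(v,ρ) = Σ_g ρ(g)·Y^p(v,g) satisfies the balanced link contributions property on variable network games: for all i ≠ j, Σ_{jk ∈ L_j(g(ρ))} [Ψ^p_i(v,ρ) − Ψ^p_i(v,ρ^{-jk})] = Σ_{ik ∈ L_i(g(ρ))} [Ψ^p_j(v,ρ) − Ψ^p_j(v,ρ^{-ik})]. Key identity: Σ_{jk ∈ L_j(g(ρ))} [Ψ^p_i(v,ρ) − Ψ^p_i(v,ρ^{-jk})] = Σ_{g ⊆ g(ρ)} ρ(g)·Σ_{jk ∈ L_j(g)} (Y^p_i(v,g) − Y^p_i(v, g − jk)). -/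

import Mathlib

/-!
The distribution `ρ^{-e}` is the image of `ρ` under `g ↦ g ∖ {e}` (more generally, restricting
`ρ` to `s` is the image under `g ↦ g ∩ s`). Hence the expected contribution of a link `e` is the
`ρ`-average of its contributions `Y g - Y (g ∖ {e})`, which vanish when `e ∉ g`; summing over the
links of the extent therefore gives the `ρ`-average of the link contributions in each network,
and the balanced identity holds network by network.
-/

open scoped Classical BigOperators

noncomputable section

/-- A link is an unordered pair of two distinct players. -/
abbrev Link (N : Type) [DecidableEq N] := {e : Sym2 N // ¬ e.IsDiag}

/-- A network is a set of links. -/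
abbrev Network (N : Type) [Fintype N] [DecidableEq N] := Finset (Link N)

variable {N : Type} [Fintype N] [DecidableEq N]

/-- The link between two distinct players. -/
def mkLink (i j : N) (h : i ≠ j) : Link N :=
  ⟨s(i, j), by simp only [Sym2.mk_isDiag_iff]; exact h⟩

/-- ρ is a network formation probability distribution. -/
def IsDist (ρ : Network N → ℝ) : Prop :=
  (∀ g, 0 ≤ ρ g) ∧ ∑ g : Network N, ρ g = 1

/-- Restriction of a network formation probability distribution to a network `g`. -/
def restrictDist (ρ : Network N → ℝ) (g : Network N) : Network N → ℝ :=
  fun h => if h ⊆ g then ∑ h' ∈ gᶜ.powerset, ρ (h ∪ h') else 0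

/-- The links of player `i` in network `g`. -/
def playerLinks (i : N) (g : Network N) : Network N :=
  g.filter (fun e => i ∈ (e : Sym2 N))

/-- ρ^{-ij} : removal of the link `e` from the distribution ρ. -/
def linkRemove (ρ : Network N → ℝ) (e : Link N) : Network N → ℝ :=
  restrictDist ρ {e}ᶜ

/-- ρ^{-i} : removal of the player `i` from the distribution ρ. -/
def playerRemove (ρ : Network N → ℝ) (i : N) : Network N → ℝ :=
  restrictDist ρ (playerLinks i Finset.univ)ᶜ

/-- The extent g(ρ) of ρ : the union of all networks with positive probability. -/
def extent (ρ : Network N → ℝ) : Network N :=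
  Finset.univ.filter (fun e => ∃ g : Network N, 0 < ρ g ∧ e ∈ g)

/-- The set N(g) of non-isolated players of a network. -/
def players (g : Network N) : Finset N :=
  Finset.univ.filter (fun i => ∃ e ∈ g, i ∈ (e : Sym2 N))

/-- The simple graph associated with a network. -/
def toGraph (g : Network N) : SimpleGraph N where
  Adj i j := ∃ e ∈ g, (e : Sym2 N) = s(i, j)
  symm := by
    constructor
    rintro i j ⟨e, he, h2⟩
    exact ⟨e, he, by rw [h2, Sym2.eq_swap]⟩
  loopless := by
    constructor
    rintro i ⟨e, he, h2⟩
    exact e.2 (by rw [h2]; exact Sym2.mk_isDiag_iff.mpr rfl)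

/-- Two links lie in the same component of `g`. -/
def sameComp (g : Network N) (e e' : Link N) : Prop :=
  ∃ i ∈ (e : Sym2 N), ∃ j ∈ (e' : Sym2 N), (toGraph g).Reachable i j

/-- The component of `g` containing the link `e`. -/
def linkComponent (g : Network N) (e : Link N) : Network N :=
  g.filter (fun e' => sameComp g e e')

/-- The set C(g) of components of the network `g`. -/
def components (g : Network N) : Finset (Network N) :=
  g.image (linkComponent g)

/-- A network game `v` is component additive. -/
def CompAdditive (v : Network N → ℝ) : Prop :=
  ∀ g : Network N, v g = ∑ h ∈ components g, v h

/-- Expected wealth 𝔼(v,ρ) of a variable network game. -/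
def expWealth (v ρ : Network N → ℝ) : ℝ :=
  ∑ g : Network N, ρ g * v g

/-- The Shapley value of a cooperative game. -/
def shapley (ω : Finset N → ℝ) (i : N) : ℝ :=
  ∑ S ∈ (Finset.univ.erase i).powerset,
    ((S.card.factorial * (Fintype.card N - S.card - 1).factorial : ℝ) /
      (Fintype.card N).factorial) * (ω (insert i S) - ω S)

/-- The restriction g|S of a network to the coalition S. -/
def netRestrict (g : Network N) (S : Finset N) : Network N :=
  g.filter (fun e => ∀ j ∈ (e : Sym2 N), j ∈ S)

/-- The Myerson Value of a network game. -/
def myerson (v : Network N → ℝ) (g : Network N) (i : N) : ℝ :=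
  shapley (fun S => v (netRestrict g S)) i

/-- The Expected Myerson Value of a variable network game. -/
def expectedMyerson (v ρ : Network N → ℝ) (i : N) : ℝ :=
  ∑ g : Network N, ρ g * myerson v g i

/-- The cooperative game ω_{(v,ρ)} associated with a variable network game. -/
def coopGame (v ρ : Network N → ℝ) (S : Finset N) : ℝ :=
  ∑ g : Network N, ρ g * v (netRestrict g S)

theorem restrictDist_eq_sum_inter_eq (ρ : Network N → ℝ) (s h : Network N) :
    restrictDist ρ s h = ∑ g with g ∩ s = h, ρ g := by
  by_cases hs : h ⊆ s
  · rw [restrictDist, if_pos hs]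
    refine Finset.sum_nbij' (h ∪ ·) (· \ s) ?_ ?_ ?_ ?_ fun _ _ => rfl
    · intro t ht
      replace ht : Disjoint t s := le_compl_iff_disjoint_right.mp (Finset.mem_powerset.mp ht)
      simp [Finset.union_inter_distrib_right, Finset.inter_eq_left.mpr hs,
        Finset.disjoint_iff_inter_eq_empty.mp ht]
    · intro g _
      exact Finset.mem_powerset.mpr (le_compl_iff_disjoint_right.mpr Finset.sdiff_disjoint)
    · intro t ht
      replace ht : Disjoint t s := le_compl_iff_disjoint_right.mp (Finset.mem_powerset.mp ht)
      rw [Finset.union_sdiff_distrib, Finset.sdiff_eq_empty_iff_subset.mpr hs,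
        Finset.empty_union, ht.sdiff_eq_left]
    · intro g hg
      rw [← (Finset.mem_filter.mp hg).2]
      exact sup_inf_sdiff g s
  · rw [restrictDist, if_neg hs, eq_comm]
    refine Finset.sum_eq_zero fun g hg => absurd ?_ hs
    rw [(Finset.mem_filter.mp hg).2.symm]
    exact Finset.inter_subset_right

theorem sum_restrictDist_mul (ρ f : Network N → ℝ) (s : Network N) :
    ∑ h, restrictDist ρ s h * f h = ∑ g, ρ g * f (g ∩ s) := by
  simp_rw [restrictDist_eq_sum_inter_eq, Finset.sum_mul]
  rw [← Finset.sum_fiberwise Finset.univ (· ∩ s) (fun g => ρ g * f (g ∩ s))]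
  refine Finset.sum_congr rfl fun h _ => Finset.sum_congr rfl fun g hg => ?_
  rw [(Finset.mem_filter.mp hg).2]

theorem sum_linkRemove_mul (ρ f : Network N → ℝ) (e : Link N) :
    ∑ h, linkRemove ρ e h * f h = ∑ g, ρ g * f (g.erase e) := by
  simp_rw [linkRemove, sum_restrictDist_mul, ← Finset.sdiff_eq_inter_compl,
    Finset.sdiff_singleton_eq_erase]

theorem subset_extent {ρ : Network N → ℝ} (hρ : ∀ g, 0 ≤ ρ g) {g : Network N}
    (hg : ρ g ≠ 0) : g ⊆ extent ρ := fun e he =>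
  Finset.mem_filter.mpr ⟨Finset.mem_univ e, g, (hρ g).lt_of_ne' hg, he⟩

theorem sum_playerLinks_sub_erase_of_subset (Y : Network N → ℝ) (b : N)
    {g G : Network N} (hgG : g ⊆ G) :
    ∑ e ∈ playerLinks b G, (Y g - Y (g.erase e)) =
      ∑ e ∈ playerLinks b g, (Y g - Y (g.erase e)) := by
  refine (Finset.sum_subset (Finset.filter_subset_filter _ hgG) fun e heG heg => ?_).symm
  have he : e ∉ g := fun he => heg (Finset.mem_filter.mpr ⟨he, (Finset.mem_filter.mp heG).2⟩)
  rw [Finset.erase_eq_of_notMem he, sub_self]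

theorem sum_playerLinks_extent_sub_linkRemove {ρ : Network N → ℝ} (hρ : ∀ g, 0 ≤ ρ g)
    (Y : Network N → ℝ) (b : N) :
    ∑ e ∈ playerLinks b (extent ρ), (∑ g, ρ g * Y g - ∑ g, linkRemove ρ e g * Y g) =
      ∑ g, ρ g * ∑ e ∈ playerLinks b g, (Y g - Y (g.erase e)) := by
  simp_rw [sum_linkRemove_mul, ← Finset.sum_sub_distrib, ← mul_sub, Finset.mul_sum]
  rw [Finset.sum_comm]
  refine Finset.sum_congr rfl fun g _ => ?_
  by_cases hg : ρ g = 0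
  · simp [hg]
  · rw [← Finset.mul_sum, ← Finset.mul_sum,
      sum_playerLinks_sub_erase_of_subset Y b (subset_extent hρ hg)]

theorem standardExtension_balancedLinkContributions_general
    (Yp : (Network N → ℝ) → Network N → N → ℝ)
    (hYp : ∀ (v : Network N → ℝ) (g : Network N) (i j : N), i ≠ j →
      ∑ e ∈ playerLinks j g, (Yp v g i - Yp v (g.erase e) i) =
        ∑ e ∈ playerLinks i g, (Yp v g j - Yp v (g.erase e) j))
    (v ρ : Network N → ℝ) (hρ : IsDist ρ) (i j : N) (hij : i ≠ j) :
    ∑ e ∈ playerLinks j (extent ρ),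
        ((∑ g : Network N, ρ g * Yp v g i) - ∑ g : Network N, linkRemove ρ e g * Yp v g i) =
      ∑ e ∈ playerLinks i (extent ρ),
        ((∑ g : Network N, ρ g * Yp v g j) -
          ∑ g : Network N, linkRemove ρ e g * Yp v g j) := by
  rw [sum_playerLinks_extent_sub_linkRemove hρ.1, sum_playerLinks_extent_sub_linkRemove hρ.1]
  exact Finset.sum_congr rfl fun g _ => by rw [hYp v g i j hij]

/-- if the Position Value satisfies the balanced link contributions
property on network games, then the Expected Position Value satisfies the balanced
link contributions property on variable network games. -/
theorem standardExtension_balancedLinkContributions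
    (Yp : (Network N → ℝ) → Network N → N → ℝ)
    (hYp : ∀ (v : Network N → ℝ) (g : Network N) (i j : N), i ≠ j →
      ∑ e ∈ playerLinks j g, (Yp v g i - Yp v (g.erase e) i) =
        ∑ e ∈ playerLinks i g, (Yp v g j - Yp v (g.erase e) j))
    (v ρ : Network N → ℝ) (hv : v ∅ = 0) (hρ : IsDist ρ) (i j : N) (hij : i ≠ j) :
    ∑ e ∈ playerLinks j (extent ρ),
        ((∑ g : Network N, ρ g * Yp v g i) - ∑ g : Network N, linkRemove ρ e g * Yp v g i) =
      ∑ e ∈ playerLinks i (extent ρ),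
        ((∑ g : Network N, ρ g * Yp v g j) -
          ∑ g : Network N, linkRemove ρ e g * Yp v g j) :=
  standardExtension_balancedLinkContributions_general Yp hYp v ρ hρ i j hij
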